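/- arXiv:2202.08008 — 5 statements merged into one kernel-verified Lean document; each statement's English description precedes it below -/
import Mathlib

section
/- Let s1 and s2 be two line segments in the plane, each of length at most 1. If the distance between s1 and s2 is at most √3/2, then there exists an endpoint p1 of s1 and an endpoint p2 of s2 with ‖p1 − p2‖ ≤ 1. -/
set_option maxHeartbeats 1000000
open scoped RealInnerProductSpace

namespace Stmt1Aux

noncomputable def Af (x y p : EuclideanSpace ℝ (Fin 2)) : ℝ :=
  (y 0 - x 0) * (p 0 - x 0) + (y 1 - x 1) * (p 1 - x 1)

noncomputable def Bf (x y p : EuclideanSpace ℝ (Fin 2)) : ℝ :=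
  (y 0 - x 0) * (p 1 - x 1) - (y 1 - x 1) * (p 0 - x 0)

lemma dist_sq (p q : EuclideanSpace ℝ (Fin 2)) :
    dist p q ^ 2 = (p 0 - q 0)^2 + (p 1 - q 1)^2 := by
  rw [EuclideanSpace.dist_eq, Real.sq_sqrt (by positivity)]
  simp [Fin.sum_univ_two, Real.dist_eq, sq_abs]

lemma key_id (x y p q : EuclideanSpace ℝ (Fin 2)) :
    ((y 0 - x 0)^2 + (y 1 - x 1)^2) * dist p q ^ 2
      = (Af x y p - Af x y q)^2 + (Bf x y p - Bf x y q)^2 := by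
  rw [dist_sq]; simp only [Af, Bf]; ring

lemma Af_swap (x y p : EuclideanSpace ℝ (Fin 2)) :
    Af y x p = ((y 0 - x 0)^2 + (y 1 - x 1)^2) - Af x y p := by
  simp only [Af]; ring

lemma Bf_swap (x y p : EuclideanSpace ℝ (Fin 2)) : Bf y x p = - Bf x y p := by
  simp only [Bf]; ring

lemma isCompact_seg (u v : EuclideanSpace ℝ (Fin 2)) : IsCompact (segment ℝ u v) := by
  rw [segment_eq_image]
  exact isCompact_Icc.image (by fun_prop)

lemma near_endpoint (u v x : EuclideanSpace ℝ (Fin 2)) (h : dist u v ≤ 1)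
    (hx : x ∈ segment ℝ u v) : ∃ p, (p = u ∨ p = v) ∧ dist p x ≤ 1/2 := by
  obtain ⟨a, b, ha, hb, hab, rfl⟩ := hx
  rcases le_total a b with h' | h'
  · refine ⟨v, Or.inr rfl, ?_⟩
    have he : v - (a • u + b • v) = a • (v - u) := by
      have hb' : b = 1 - a := by linarith
      rw [hb']; module
    have h2 : ‖v - u‖ ≤ 1 := by rwa [← dist_eq_norm, dist_comm]
    rw [dist_eq_norm, he, norm_smul, Real.norm_eq_abs, abs_of_nonneg ha]
    nlinarith [norm_nonneg (v - u)]
  · refine ⟨u, Or.inl rfl, ?_⟩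
    have he : u - (a • u + b • v) = b • (u - v) := by
      have ha' : a = 1 - b := by linarith
      rw [ha']; module
    have h2 : ‖u - v‖ ≤ 1 := by rwa [← dist_eq_norm]
    rw [dist_eq_norm, he, norm_smul, Real.norm_eq_abs, abs_of_nonneg hb]
    nlinarith [norm_nonneg (u - v)]

lemma pick_aux (D b1 b2 e1 e2 : ℝ) (hD3 : D ≤ 3/4)
    (hb1 : b1 ≤ 0) (hb2 : 0 ≤ b2) (he1 : e1 ≤ 0) (he2 : 0 ≤ e2)
    (hbd : (b1 - b2)^2 ≤ D) (hed : (e1 - e2)^2 ≤ D) :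
    ∃ b, (b = b1 ∨ b = b2) ∧ ∃ e, (e = e1 ∨ e = e2) ∧ D^2 + (b - e)^2 ≤ D := by
  have hD0 : 0 ≤ D := le_trans (sq_nonneg _) hbd
  rcases le_total b2 e2 with h | h
  · rcases le_total (2*b2) (e1+e2) with h2 | h2
    · exact ⟨b2, Or.inr rfl, e1, Or.inl rfl, by nlinarith [sq_nonneg (e2 - e1 - 2*(b2 - e1))]⟩
    · exact ⟨b2, Or.inr rfl, e2, Or.inr rfl, by nlinarith [sq_nonneg (e2 - e1 - 2*(e2 - b2))]⟩
  · rcases le_total (2*e2) (b1+b2) with h2 | h2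
    · exact ⟨b1, Or.inl rfl, e2, Or.inr rfl, by nlinarith [sq_nonneg (b2 - b1 - 2*(e2 - b1))]⟩
    · exact ⟨b2, Or.inr rfl, e2, Or.inr rfl, by nlinarith [sq_nonneg (b2 - b1 - 2*(b2 - e2))]⟩

lemma seg_select (x y u v : EuclideanSpace ℝ (Fin 2)) (L : ℝ) (hL : 0 ≤ L)
    (hAu : Af x y u ≤ 0) (hAv : Af x y v ≤ 0)
    (hx : x ∈ segment ℝ u v)
    (hlen : (Af x y u - Af x y v)^2 + (Bf x y u - Bf x y v)^2 ≤ L) :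
    ∃ p q, (p = u ∨ p = v) ∧ (q = u ∨ q = v) ∧ Af x y p = 0 ∧ Af x y q = 0 ∧
      Bf x y p ≤ 0 ∧ 0 ≤ Bf x y q ∧ (Bf x y p - Bf x y q)^2 ≤ L := by
  obtain ⟨a, b, ha, hb, hab, hxe⟩ := hx
  have hx0 : a * u 0 + b * v 0 = x 0 := by
    have := congrArg (fun z : EuclideanSpace ℝ (Fin 2) => z 0) hxe
    simpa using this
  have hx1 : a * u 1 + b * v 1 = x 1 := by
    have := congrArg (fun z : EuclideanSpace ℝ (Fin 2) => z 1) hxe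
    simpa using this
  have hAc : a * Af x y u + b * Af x y v = 0 := by
    simp only [Af]
    linear_combination (y 0 - x 0) * hx0 + (y 1 - x 1) * hx1
      - ((y 0 - x 0) * x 0 + (y 1 - x 1) * x 1) * hab
  have hBc : a * Bf x y u + b * Bf x y v = 0 := by
    simp only [Bf]
    linear_combination (y 0 - x 0) * hx1 - (y 1 - x 1) * hx0
      - ((y 0 - x 0) * x 1 - (y 1 - x 1) * x 0) * hab
  have hgap : (Bf x y u - Bf x y v)^2 ≤ L := by nlinarith [sq_nonneg (Af x y u - Af x y v)]
  have hgap' : (Bf x y v - Bf x y u)^2 ≤ L := by nlinarith [sq_nonneg (Af x y u - Af x y v)]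
  rcases eq_or_lt_of_le ha with ha0 | ha0
  · have hb1 : b = 1 := by linarith
    have hAv0 : Af x y v = 0 := by rw [← ha0] at hAc; rw [hb1] at hAc; linarith
    have hBv0 : Bf x y v = 0 := by rw [← ha0] at hBc; rw [hb1] at hBc; linarith
    exact ⟨v, v, Or.inr rfl, Or.inr rfl, hAv0, hAv0, le_of_eq hBv0, ge_of_eq hBv0,
      by simpa [hBv0] using hL⟩
  rcases eq_or_lt_of_le hb with hb0 | hb0
  · have ha1 : a = 1 := by linarith
    have hAu0 : Af x y u = 0 := by rw [← hb0] at hAc; rw [ha1] at hAc; linarith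
    have hBu0 : Bf x y u = 0 := by rw [← hb0] at hBc; rw [ha1] at hBc; linarith
    exact ⟨u, u, Or.inl rfl, Or.inl rfl, hAu0, hAu0, le_of_eq hBu0, ge_of_eq hBu0,
      by simpa [hBu0] using hL⟩
  have hAu0 : Af x y u = 0 := by nlinarith
  have hAv0 : Af x y v = 0 := by nlinarith
  rcases le_total (Bf x y u) 0 with hBu | hBu
  · have hBv : 0 ≤ Bf x y v := by nlinarith
    exact ⟨u, v, Or.inl rfl, Or.inr rfl, hAu0, hAv0, hBu, hBv, hgap⟩
  · have hBv : Bf x y v ≤ 0 := by nlinarith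
    exact ⟨v, u, Or.inr rfl, Or.inl rfl, hAv0, hAu0, hBv, hBu, hgap'⟩

end Stmt1Aux

open Stmt1Aux

/-- Two segments of length at most 1 at distance at most √3/2 have a pair of
endpoints at distance at most 1. -/
theorem stmt_1 (u₁ v₁ u₂ v₂ : EuclideanSpace ℝ (Fin 2))
    (h1 : dist u₁ v₁ ≤ 1) (h2 : dist u₂ v₂ ≤ 1)
    (hd : sInf (Set.image2 dist (segment ℝ u₁ v₁) (segment ℝ u₂ v₂)) ≤ Real.sqrt 3 / 2) :
    ∃ p₁ ∈ ({u₁, v₁} : Set (EuclideanSpace ℝ (Fin 2))),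
      ∃ p₂ ∈ ({u₂, v₂} : Set (EuclideanSpace ℝ (Fin 2))), dist p₁ p₂ ≤ 1 := by
  -- a closest pair (x, y)
  have hfc : ContinuousOn
      (fun p : EuclideanSpace ℝ (Fin 2) × EuclideanSpace ℝ (Fin 2) => dist p.1 p.2)
      ((segment ℝ u₁ v₁) ×ˢ (segment ℝ u₂ v₂)) :=
    (continuous_fst.dist continuous_snd).continuousOn
  obtain ⟨z, hz, hmin⟩ := ((isCompact_seg u₁ v₁).prod (isCompact_seg u₂ v₂)).exists_isMinOn
    ⟨(u₁, u₂), Set.mk_mem_prod (left_mem_segment ℝ u₁ v₁) (left_mem_segment ℝ u₂ v₂)⟩ hfc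
  obtain ⟨x, y⟩ := z
  have hx : x ∈ segment ℝ u₁ v₁ := hz.1
  have hy : y ∈ segment ℝ u₂ v₂ := hz.2
  have hsinf : sInf (Set.image2 dist (segment ℝ u₁ v₁) (segment ℝ u₂ v₂)) = dist x y := by
    rw [← Set.image_prod]
    exact IsLeast.csInf_eq ⟨⟨(x, y), hz, rfl⟩, fun r hr => by
      obtain ⟨p, hp, rfl⟩ := hr; exact hmin hp⟩
  have hdxy : dist x y ≤ Real.sqrt 3 / 2 := hsinf ▸ hd
  -- variational inequalities
  have hbdd1 : BddBelow (Set.range fun w : segment ℝ u₁ v₁ => ‖y - ↑w‖) := by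
    refine ⟨0, ?_⟩; rintro r ⟨w, rfl⟩; exact norm_nonneg _
  haveI : Nonempty ↥(segment ℝ u₁ v₁) := ⟨⟨x, hx⟩⟩
  haveI : Nonempty ↥(segment ℝ u₂ v₂) := ⟨⟨y, hy⟩⟩
  have hproj1 : ‖y - x‖ = ⨅ w : segment ℝ u₁ v₁, ‖y - ↑w‖ := by
    refine le_antisymm (le_ciInf fun w => ?_) (ciInf_le hbdd1 ⟨x, hx⟩)
    have := hmin (Set.mk_mem_prod w.2 hy)
    simpa [dist_eq_norm, norm_sub_rev] using this
  have hvar1 : ∀ p ∈ segment ℝ u₁ v₁, ⟪y - x, p - x⟫ ≤ 0 :=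
    (norm_eq_iInf_iff_real_inner_le_zero (convex_segment u₁ v₁) hx).mp hproj1
  have hbdd2 : BddBelow (Set.range fun w : segment ℝ u₂ v₂ => ‖x - ↑w‖) := by
    refine ⟨0, ?_⟩; rintro r ⟨w, rfl⟩; exact norm_nonneg _
  have hproj2 : ‖x - y‖ = ⨅ w : segment ℝ u₂ v₂, ‖x - ↑w‖ := by
    refine le_antisymm (le_ciInf fun w => ?_) (ciInf_le hbdd2 ⟨y, hy⟩)
    have := hmin (Set.mk_mem_prod hx w.2)
    simpa [dist_eq_norm, norm_sub_rev] using this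
  have hvar2 : ∀ p ∈ segment ℝ u₂ v₂, ⟪x - y, p - y⟫ ≤ 0 :=
    (norm_eq_iInf_iff_real_inner_le_zero (convex_segment u₂ v₂) hy).mp hproj2
  -- coordinates
  have hAu1 : Af x y u₁ ≤ 0 := by
    have h := hvar1 u₁ (left_mem_segment ℝ u₁ v₁)
    rw [PiLp.inner_apply] at h
    simp [Fin.sum_univ_two, RCLike.inner_apply] at h
    simp only [Af]; linear_combination h
  have hAv1 : Af x y v₁ ≤ 0 := by
    have h := hvar1 v₁ (right_mem_segment ℝ u₁ v₁)
    rw [PiLp.inner_apply] at h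
    simp [Fin.sum_univ_two, RCLike.inner_apply] at h
    simp only [Af]; linear_combination h
  have hAu2 : Af y x u₂ ≤ 0 := by
    have h := hvar2 u₂ (left_mem_segment ℝ u₂ v₂)
    rw [PiLp.inner_apply] at h
    simp [Fin.sum_univ_two, RCLike.inner_apply] at h
    simp only [Af]; linear_combination h
  have hAv2 : Af y x v₂ ≤ 0 := by
    have h := hvar2 v₂ (right_mem_segment ℝ u₂ v₂)
    rw [PiLp.inner_apply] at h
    simp [Fin.sum_univ_two, RCLike.inner_apply] at h
    simp only [Af]; linear_combination h
  obtain ⟨D, hDdef⟩ : ∃ D : ℝ, D = (y 0 - x 0)^2 + (y 1 - x 1)^2 := ⟨_, rfl⟩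
  have hDd : dist x y ^ 2 = D := by rw [dist_sq, hDdef]; ring
  have hD0 : 0 ≤ D := hDd ▸ sq_nonneg _
  have hs3 : Real.sqrt 3 ^ 2 = 3 := Real.sq_sqrt (by norm_num)
  have hD3 : D ≤ 3/4 := by
    nlinarith [dist_nonneg (x := x) (y := y), Real.sqrt_nonneg 3]
  rcases eq_or_lt_of_le hD0 with hDz | hDpos
  · -- degenerate case : the segments intersect
    have hxy0 : dist x y = 0 := by nlinarith [dist_nonneg (x := x) (y := y)]
    obtain ⟨p1, hp1, hd1⟩ := near_endpoint u₁ v₁ x h1 hx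
    obtain ⟨p2, hp2, hd2⟩ := near_endpoint u₂ v₂ y h2 hy
    refine ⟨p1, by rcases hp1 with rfl | rfl <;> simp, p2,
      by rcases hp2 with rfl | rfl <;> simp, ?_⟩
    have ht := dist_triangle4 p1 x y p2
    have h2' : dist y p2 ≤ 1/2 := by rw [dist_comm]; exact hd2
    linarith
  -- main case
  have hlen1 : (Af x y u₁ - Af x y v₁)^2 + (Bf x y u₁ - Bf x y v₁)^2 ≤ D := by
    have hk := key_id x y u₁ v₁
    rw [← hDdef] at hk
    have hds : dist u₁ v₁ ^ 2 ≤ 1 := by nlinarith [dist_nonneg (x := u₁) (y := v₁)]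
    have hm : D * dist u₁ v₁ ^ 2 ≤ D * 1 := mul_le_mul_of_nonneg_left hds hD0
    rw [hk] at hm
    linarith
  have hlen2 : (Af y x u₂ - Af y x v₂)^2 + (Bf y x u₂ - Bf y x v₂)^2 ≤ D := by
    have hk := key_id y x u₂ v₂
    have hcoef : (x 0 - y 0)^2 + (x 1 - y 1)^2 = D := by rw [hDdef]; ring
    rw [hcoef] at hk
    have hds : dist u₂ v₂ ^ 2 ≤ 1 := by nlinarith [dist_nonneg (x := u₂) (y := v₂)]
    have hm : D * dist u₂ v₂ ^ 2 ≤ D * 1 := mul_le_mul_of_nonneg_left hds hD0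
    rw [hk] at hm
    linarith
  obtain ⟨p, q, hp, hq, hAp, hAq, hBp, hBq, hBpq⟩ :=
    seg_select x y u₁ v₁ D hD0 hAu1 hAv1 hx hlen1
  obtain ⟨p', q', hp', hq', hAp', hAq', hBp', hBq', hBpq'⟩ :=
    seg_select y x u₂ v₂ D hD0 hAu2 hAv2 hy hlen2
  -- translate segment 2 data into the (x, y) frame
  rw [Bf_swap] at hBp' hBq'
  have he1 : Bf x y q' ≤ 0 := by linarith
  have he2 : 0 ≤ Bf x y p' := by linarith
  have hed : (Bf x y q' - Bf x y p')^2 ≤ D := by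
    rw [Bf_swap x y p', Bf_swap x y q'] at hBpq'
    have : (Bf x y q' - Bf x y p')^2 = (-Bf x y p' - -Bf x y q')^2 := by ring
    linarith [hBpq', this.ge, this.le]
  obtain ⟨bb, hbb, ee, hee, hfin⟩ :=
    pick_aux D (Bf x y p) (Bf x y q) (Bf x y q') (Bf x y p') hD3 hBp hBq he1 he2 hBpq hed
  have hsel1 : ∃ P1, (P1 = u₁ ∨ P1 = v₁) ∧ Af x y P1 = 0 ∧ Bf x y P1 = bb := by
    rcases hbb with rfl | rfl
    exacts [⟨p, hp, hAp, rfl⟩, ⟨q, hq, hAq, rfl⟩]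
  have hsel2 : ∃ P2, (P2 = u₂ ∨ P2 = v₂) ∧ Af y x P2 = 0 ∧ Bf x y P2 = ee := by
    rcases hee with rfl | rfl
    exacts [⟨q', hq', hAq', rfl⟩, ⟨p', hp', hAp', rfl⟩]
  obtain ⟨P1, hP1uv, hAP1, hBP1⟩ := hsel1
  obtain ⟨P2, hP2uv, hAP2, hBP2⟩ := hsel2
  have hAP2' : Af x y P2 = D := by
    have hs := Af_swap x y P2
    rw [← hDdef, hAP2] at hs
    linarith
  have hkey := key_id x y P1 P2
  rw [← hDdef, hAP1, hAP2', hBP1, hBP2] at hkey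
  have hsq : dist P1 P2 ^ 2 ≤ 1 := by
    have hmul : D * dist P1 P2 ^ 2 ≤ D * 1 := by
      rw [hkey]
      have e1 : (0 - D)^2 = D^2 := by ring
      have e2 : D * 1 = D := by ring
      linarith
    exact le_of_mul_le_mul_left hmul hDpos
  have hfin' : dist P1 P2 ≤ 1 := by
    have hz := sq_nonneg (dist P1 P2 - 1)
    have he : (dist P1 P2 - 1)^2 = dist P1 P2 ^2 - 2 * dist P1 P2 + 1 := by ring
    linarith
  exact ⟨P1, by rcases hP1uv with rfl | rfl <;> simp, P2,
    by rcases hP2uv with rfl | rfl <;> simp, hfin'⟩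
end

section
/- Let G be a unit-disk graph on a finite point set V ⊆ ℝ² (u, v adjacent iff ‖u − v‖ ≤ 1). Let g be a point of the plane, and let u, v ∈ V each be incident to an edge of G that intersects a fixed axis-aligned square cell C of side length c = √15/10. Then the hop-distance from u to v in G is at most 3. -/
/-! For any `q`, a point `p` of a segment `[a, b]` has an endpoint `e` with
`dist q e ^ 2 ≤ dist q p ^ 2 + dist a b ^ 2 / 4`: by Stewart's theorem a convex combination of the
two squared distances to the endpoints is `dist q p ^ 2 + t (1 - t) dist a b ^ 2`.
Two points of the cell are at squared distance at most `2 c ^ 2 = 3 / 10`. Going from the cell point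
of `v`'s edge to an endpoint `e` of `u`'s edge, and from `e` to an endpoint of `v`'s edge, yields
endpoints at squared distance at most `3 / 10 + 1 / 4 + 1 / 4 ≤ 1`, hence equal or adjacent. -/

section Segment

variable {E : Type*} [NormedAddCommGroup E] [InnerProductSpace ℝ E]

/-- Stewart's theorem. -/
theorem one_sub_mul_dist_sq_add_mul_dist_sq (q a b : E) (t : ℝ) :
    (1 - t) * dist q a ^ 2 + t * dist q b ^ 2 =
      dist q ((1 - t) • a + t • b) ^ 2 + t * (1 - t) * dist a b ^ 2 := by
  have hp : q - ((1 - t) • a + t • b) = (q - a) - t • (b - a) := by module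
  have hb : q - b = (q - a) - (b - a) := by abel
  rw [dist_eq_norm, dist_eq_norm, dist_eq_norm, dist_eq_norm', hp, hb,
    norm_sub_sq_real (q - a) (b - a), norm_sub_sq_real (q - a) (t • (b - a)), norm_smul,
    real_inner_smul_right, Real.norm_eq_abs, mul_pow, sq_abs]
  ring

theorem exists_endpoint_dist_sq_le_of_mem_segment {a b p : E} (q : E)
    (hp : p ∈ segment ℝ a b) :
    ∃ e ∈ ({a, b} : Set E), dist q e ^ 2 ≤ dist q p ^ 2 + dist a b ^ 2 / 4 := by
  obtain ⟨s, t, hs, ht, hst, rfl⟩ := hp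
  obtain rfl : s = 1 - t := by linarith
  have hstewart := one_sub_mul_dist_sq_add_mul_dist_sq q a b t
  have hquarter : t * (1 - t) ≤ 1 / 4 := by nlinarith [sq_nonneg (2 * t - 1)]
  rcases le_total (dist q a) (dist q b) with h | h
  · refine ⟨a, by simp, ?_⟩
    nlinarith [mul_le_mul_of_nonneg_left (pow_le_pow_left₀ dist_nonneg h 2) ht,
      sq_nonneg (dist a b)]
  · refine ⟨b, by simp, ?_⟩
    nlinarith [mul_le_mul_of_nonneg_left (pow_le_pow_left₀ dist_nonneg h 2) hs,
      sq_nonneg (dist a b)]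

/-- The segment-connection lemma. -/
theorem exists_endpoints_dist_le_one_of_mem_segment {a b a' b' p q : E}
    (hab : dist a b ≤ 1) (hab' : dist a' b' ≤ 1)
    (hp : p ∈ segment ℝ a b) (hq : q ∈ segment ℝ a' b') (hpq : dist p q ^ 2 ≤ 1 / 2) :
    ∃ e ∈ ({a, b} : Set E), ∃ f ∈ ({a', b'} : Set E), dist e f ≤ 1 := by
  obtain ⟨e, he, hqe⟩ := exists_endpoint_dist_sq_le_of_mem_segment q hp
  obtain ⟨f, hf, hef⟩ := exists_endpoint_dist_sq_le_of_mem_segment e hq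
  refine ⟨e, he, f, hf, (sq_le_one_iff₀ dist_nonneg).1 ?_⟩
  rw [dist_comm q p, dist_comm q e] at *
  nlinarith [dist_nonneg (x := a) (y := b), dist_nonneg (x := a') (y := b')]

end Segment

theorem EuclideanSpace.dist_sq_le_of_forall_dist_le {ι : Type*} [Fintype ι]
    {p q : EuclideanSpace ℝ ι} {c : ℝ} (h : ∀ i, dist (p i) (q i) ≤ c) :
    dist p q ^ 2 ≤ Fintype.card ι * c ^ 2 := by
  rw [EuclideanSpace.dist_eq, Real.sq_sqrt (by positivity)]
  calc ∑ i, dist (p i) (q i) ^ 2 ≤ ∑ _i : ι, c ^ 2 :=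
        Finset.sum_le_sum fun i _ => pow_le_pow_left₀ dist_nonneg (h i) 2
    _ = Fintype.card ι * c ^ 2 := by simp

local notation "ℝ²" => EuclideanSpace ℝ (Fin 2)

section UnitDiskGraph

variable {V : Finset ℝ²} {G : SimpleGraph V}

theorem exists_walk_length_le_one_of_dist_le_one
    (hG : ∀ a b : V, G.Adj a b ↔ a ≠ b ∧ dist (a : ℝ²) b ≤ 1)
    {a b : V} (h : dist (a : ℝ²) b ≤ 1) : ∃ w : G.Walk a b, w.length ≤ 1 := by
  by_cases hab : a = b
  · subst hab
    exact ⟨.nil, by simp⟩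
  · exact ⟨.cons ((hG a b).2 ⟨hab, h⟩) .nil, by simp⟩

theorem exists_walk_length_le_three_of_endpoints_dist_le_one
    (hG : ∀ a b : V, G.Adj a b ↔ a ≠ b ∧ dist (a : ℝ²) b ≤ 1)
    {u u' v v' : V} (hu : G.Adj u u') (hv : G.Adj v v')
    (h : ∃ e ∈ ({(u : ℝ²), (u' : ℝ²)} : Set ℝ²),
      ∃ f ∈ ({(v : ℝ²), (v' : ℝ²)} : Set ℝ²), dist e f ≤ 1) :
    ∃ w : G.Walk u v, w.length ≤ 3 := by
  have near_edge : ∀ {a a' : V}, G.Adj a a' → ∀ e ∈ ({(a : ℝ²), (a' : ℝ²)} : Set ℝ²),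
      ∃ b : V, (b : ℝ²) = e ∧ ∃ w : G.Walk a b, w.length ≤ 1 := by
    rintro a a' haa' e (rfl | rfl)
    exacts [⟨a, rfl, .nil, by simp⟩, ⟨a', rfl, .cons haa' .nil, by simp⟩]
  obtain ⟨e, he, f, hf, hef⟩ := h
  obtain ⟨e, rfl, w₁, hw₁⟩ := near_edge hu e he
  obtain ⟨f, rfl, w₃, hw₃⟩ := near_edge hv f hf
  obtain ⟨w₂, hw₂⟩ := exists_walk_length_le_one_of_dist_le_one hG hef
  refine ⟨w₁.append (w₂.append w₃.reverse), ?_⟩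
  simp only [SimpleGraph.Walk.length_append, SimpleGraph.Walk.length_reverse]
  omega

end UnitDiskGraph

/-- In a unit-disk graph on a finite point set `V ⊆ ℝ²`, if `u` and `v` are
each incident to an edge intersecting a fixed axis-aligned square cell `C` of side
`c = √15/10`, then the hop-distance from `u` to `v` is at most `3`. -/
theorem stmt_6 (V : Finset (EuclideanSpace ℝ (Fin 2)))
    (G : SimpleGraph V)
    (hG : ∀ a b : V, G.Adj a b ↔ a ≠ b ∧ dist (a : EuclideanSpace ℝ (Fin 2)) b ≤ 1)
    (c : ℝ) (hc : c = Real.sqrt 15 / 10) (x y : ℝ)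
    (C : Set (EuclideanSpace ℝ (Fin 2)))
    (hC : C = {p | p 0 ∈ Set.Icc x (x + c) ∧ p 1 ∈ Set.Icc y (y + c)})
    (u v u' v' : V)
    (hu : G.Adj u u' ∧ (segment ℝ (u : EuclideanSpace ℝ (Fin 2)) u' ∩ C).Nonempty)
    (hv : G.Adj v v' ∧ (segment ℝ (v : EuclideanSpace ℝ (Fin 2)) v' ∩ C).Nonempty) :
    ∃ w : G.Walk u v, w.length ≤ 3 := by
  obtain ⟨p, hp, hpC⟩ := hu.2
  obtain ⟨q, hq, hqC⟩ := hv.2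
  subst hC
  have hpq : dist p q ^ 2 ≤ 1 / 2 :=
    calc dist p q ^ 2 ≤ 2 * c ^ 2 := by
          simpa using EuclideanSpace.dist_sq_le_of_forall_dist_le (c := c) <|
            Fin.forall_fin_two.2 ⟨by simpa using Real.dist_le_of_mem_Icc hpC.1 hqC.1,
              by simpa using Real.dist_le_of_mem_Icc hpC.2 hqC.2⟩
      _ = 3 / 10 := by rw [hc, div_pow, Real.sq_sqrt (by norm_num)]; norm_num
      _ ≤ 1 / 2 := by norm_num
  exact exists_walk_length_le_three_of_endpoints_dist_le_one hG hu.1 hv.1 <|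
    exists_endpoints_dist_le_one_of_mem_segment ((hG u u').1 hu.1).2 ((hG v v').1 hv.1).2
      hp hq hpq
end

section
/- Let T1 and T2 be two triangles in the plane whose sides are segments of length at most 1 (edges of a unit-disk graph), and suppose T1 and T2 both contain a common point g. Then in the unit-disk graph, some vertex of T1 is adjacent to some vertex of T2; consequently the subgraph induced on the six vertices has diameter at most 3. -/
open Set

local notation "E2" => EuclideanSpace ℝ (Fin 2)

/-- Any point of the convex hull of a set of diameter ≤ 1 is within 1 of a chosen vertex. -/
private lemma hull_dist_le {a b c x : E2} (hab : dist a b ≤ 1) (hac : dist a c ≤ 1)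
    (hx : x ∈ convexHull ℝ ({a, b, c} : Set E2)) : dist x a ≤ 1 := by
  have hsub : ({a, b, c} : Set E2) ⊆ Metric.closedBall a 1 := by
    intro y hy
    rcases hy with rfl | rfl | rfl
    · simp
    · simpa [Metric.mem_closedBall, dist_comm] using hab
    · simpa [Metric.mem_closedBall, dist_comm] using hac
  have := convexHull_min hsub (convex_closedBall a 1) hx
  simpa [Metric.mem_closedBall] using this

/-- A point of a segment of length ≤ 1 is within 1/2 of one of the endpoints. -/
private lemma seg_half {p q x : E2} (hpq : dist p q ≤ 1) (hx : x ∈ segment ℝ p q) :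
    dist x p ≤ 1 / 2 ∨ dist x q ≤ 1 / 2 := by
  obtain ⟨s, t, hs, ht, hst, rfl⟩ := hx
  have hxp : dist (s • p + t • q) p = t * dist p q := by
    have : s • p + t • q - p = t • (q - p) := by
      have hs' : s = 1 - t := by linarith
      rw [hs']; module
    rw [dist_eq_norm, this, norm_smul, Real.norm_of_nonneg ht, dist_eq_norm, norm_sub_rev]
  have hxq : dist (s • p + t • q) q = s * dist p q := by
    have : s • p + t • q - q = s • (p - q) := by
      have ht' : t = 1 - s := by linarith
      rw [ht']; module
    rw [dist_eq_norm, this, norm_smul, Real.norm_of_nonneg hs, dist_eq_norm]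
  rcases le_or_gt t (1 / 2) with h | h
  · left
    rw [hxp]
    calc t * dist p q ≤ (1/2) * 1 := by
          apply mul_le_mul h hpq dist_nonneg (by norm_num)
      _ = 1 / 2 := by norm_num
  · right
    rw [hxq]
    calc s * dist p q ≤ (1/2) * 1 := by
          apply mul_le_mul (by linarith) hpq dist_nonneg (by norm_num)
      _ = 1 / 2 := by norm_num



/-- A non-interior point of a triangle (in the plane) lies on one of its edges. -/
private lemma mem_edges_of_not_interior {a b c x : E2}
    (hx : x ∈ convexHull ℝ ({a, b, c} : Set E2))
    (hxi : x ∉ interior (convexHull ℝ ({a, b, c} : Set E2))) :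
    x ∈ segment ℝ a b ∪ segment ℝ b c ∪ segment ℝ a c := by
  by_cases hcol : Collinear ℝ ({a, b, c} : Set E2)
  · rcases hcol.wbtw_or_wbtw_or_wbtw with h | h | h
    · -- b between a and c
      have : convexHull ℝ ({a, b, c} : Set E2) ⊆ segment ℝ a c := by
        apply convexHull_min _ (convex_segment a c)
        intro y hy
        rcases hy with rfl | rfl | rfl
        · exact left_mem_segment ℝ _ _
        · exact h.mem_segment
        · exact right_mem_segment ℝ _ _
      exact Or.inr (this hx)
    · -- c between b and a
      have : convexHull ℝ ({a, b, c} : Set E2) ⊆ segment ℝ a b := by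
        apply convexHull_min _ (convex_segment a b)
        intro y hy
        rcases hy with rfl | rfl | rfl
        · exact left_mem_segment ℝ _ _
        · exact right_mem_segment ℝ _ _
        · rw [← segment_symm]; exact h.mem_segment
      exact Or.inl (Or.inl (this hx))
    · -- a between c and b
      have : convexHull ℝ ({a, b, c} : Set E2) ⊆ segment ℝ b c := by
        apply convexHull_min _ (convex_segment b c)
        intro y hy
        rcases hy with rfl | rfl | rfl
        · rw [← segment_symm]; exact h.mem_segment
        · exact left_mem_segment ℝ _ _
        · exact right_mem_segment ℝ _ _
      exact Or.inl (Or.inr (this hx))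
  · have hind : AffineIndependent ℝ ![a, b, c] :=
      affineIndependent_iff_not_collinear_set.2 hcol
    have htop : affineSpan ℝ (Set.range ![a, b, c]) = ⊤ := by
      rw [hind.affineSpan_eq_top_iff_card_eq_finrank_add_one]
      simp [finrank_euclideanSpace_fin]
    let B : AffineBasis (Fin 3) ℝ E2 := ⟨![a, b, c], hind, htop⟩
    have hrange : Set.range (B : Fin 3 → E2) = ({a, b, c} : Set E2) := by
      show Set.range ![a, b, c] = _
      ext y
      simp [Fin.exists_fin_two, Fin.exists_fin_succ]
      tauto
    have hx' : x ∈ convexHull ℝ (Set.range (B : Fin 3 → E2)) := by rw [hrange]; exact hx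
    have hnonneg : ∀ i, 0 ≤ B.coord i x := by
      have := B.convexHull_eq_nonneg_coord ▸ hx'
      exact this
    have hzero : ∃ i, B.coord i x = 0 := by
      by_contra hcon
      push_neg at hcon
      apply hxi
      rw [← hrange] at *
      rw [B.interior_convexHull]
      intro i
      exact lt_of_le_of_ne (hnonneg i) (Ne.symm (hcon i))
    have hsum : B.coord 0 x + B.coord 1 x + B.coord 2 x = 1 := by
      have := B.sum_coord_apply_eq_one x
      rwa [Fin.sum_univ_three] at this
    have hrep : B.coord 0 x • a + B.coord 1 x • b + B.coord 2 x • c = x := by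
      have := B.linear_combination_coord_eq_self x
      rwa [Fin.sum_univ_three] at this
    obtain ⟨i, hi⟩ := hzero
    fin_cases i
    · -- coord 0 = 0 : x on segment b c
      refine Or.inl (Or.inr ⟨B.coord 1 x, B.coord 2 x, hnonneg 1, hnonneg 2, ?_, ?_⟩)
      · rw [show B.coord 0 x = 0 from hi] at hsum; linarith
      · rw [show B.coord 0 x = 0 from hi] at hrep; simpa using hrep
    · refine Or.inr ⟨B.coord 0 x, B.coord 2 x, hnonneg 0, hnonneg 2, ?_, ?_⟩
      · rw [show B.coord 1 x = 0 from hi] at hsum; linarith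
      · rw [show B.coord 1 x = 0 from hi] at hrep; simpa using hrep
    · refine Or.inl (Or.inl ⟨B.coord 0 x, B.coord 1 x, hnonneg 0, hnonneg 1, ?_, ?_⟩)
      · rw [show B.coord 2 x = 0 from hi] at hsum; linarith
      · rw [show B.coord 2 x = 0 from hi] at hrep; simpa using hrep


/-- Walking from a point of a closed set to a point outside it, one meets a
non-interior point of the set which still belongs to the set. -/
private lemma exit_point {K : Set E2} (hKcl : IsClosed K) {g w : E2}
    (hg : g ∈ K) (hw : w ∉ K) :
    ∃ x ∈ segment ℝ g w, x ∈ K ∧ x ∉ interior K := by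
  set f : ℝ → E2 := fun t => (1 - t) • g + t • w with hf
  have hfc : Continuous f := by fun_prop
  have hf0 : f 0 = g := by simp [hf]
  have hf1 : f 1 = w := by simp [hf]
  set T : Set ℝ := Icc (0:ℝ) 1 ∩ f ⁻¹' K with hT
  have hT0 : (0:ℝ) ∈ T := ⟨⟨le_refl _, zero_le_one⟩, by simp [hf0, hg]⟩
  have hTb : BddAbove T := ⟨1, fun t ht => ht.1.2⟩
  have hTc : IsClosed T := isClosed_Icc.inter (hKcl.preimage hfc)
  set t0 := sSup T with ht0
  have ht0T : t0 ∈ T := hTc.csSup_mem ⟨0, hT0⟩ hTb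
  have ht0lt : t0 < 1 := by
    rcases lt_or_eq_of_le ht0T.1.2 with h | h
    · exact h
    · exfalso; apply hw; rw [← hf1, ← h]; exact ht0T.2
  refine ⟨f t0, ?_, ht0T.2, ?_⟩
  · rw [segment_eq_image]
    exact ⟨t0, ⟨ht0T.1.1, ht0T.1.2⟩, rfl⟩
  · intro hint
    have hopen : IsOpen (f ⁻¹' interior K) := isOpen_interior.preimage hfc
    rw [Metric.isOpen_iff] at hopen
    obtain ⟨δ, hδ, hball⟩ := hopen t0 hint
    set t1 := min (t0 + δ / 2) ((t0 + 1) / 2) with ht1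
    have ht1gt : t0 < t1 := by
      apply lt_min <;> linarith
    have ht1le : t1 ≤ 1 := le_trans (min_le_right _ _) (by linarith)
    have ht1T : t1 ∈ T := by
      refine ⟨⟨le_trans ht0T.1.1 ht1gt.le, ht1le⟩, ?_⟩
      have : t1 ∈ Metric.ball t0 δ := by
        rw [Metric.mem_ball, Real.dist_eq, abs_of_nonneg (by linarith)]
        have := min_le_left (t0 + δ / 2) ((t0 + 1) / 2)
        linarith [ht1 ▸ this]
      have h2 : f t1 ∈ interior K := hball this
      exact Set.mem_preimage.2 (interior_subset h2)
    exact absurd (le_csSup hTb ht1T) (not_le.2 ht1gt)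
open Set

private lemma near_vertex {a b c y : EuclideanSpace ℝ (Fin 2)}
    (hab : dist a b ≤ 1) (hbc : dist b c ≤ 1) (hac : dist a c ≤ 1)
    (hy : y ∈ segment ℝ a b ∪ segment ℝ b c ∪ segment ℝ a c) :
    ∃ u ∈ ({a, b, c} : Set (EuclideanSpace ℝ (Fin 2))), dist y u ≤ 1 / 2 := by
  rcases hy with (h | h) | h
  · rcases seg_half hab h with h' | h'
    exacts [⟨a, by simp, h'⟩, ⟨b, by simp, h'⟩]
  · rcases seg_half hbc h with h' | h'
    exacts [⟨b, by simp, h'⟩, ⟨c, by simp, h'⟩]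
  · rcases seg_half hac h with h' | h'
    exacts [⟨a, by simp, h'⟩, ⟨c, by simp, h'⟩]

/-- Two unit-disk-graph triangles (convex hulls of three points with pairwise
distances at most 1) sharing a common point `g` have a pair of vertices, one from each triangle,
at distance at most 1 (i.e. adjacent in the unit-disk graph); consequently, the subgraph induced
on the six vertices has diameter at most 3 (any two of them are joined by a walk of length ≤ 3).
-/
theorem stmt_7 (a₁ b₁ c₁ a₂ b₂ c₂ g : EuclideanSpace ℝ (Fin 2))
    (h₁ : dist a₁ b₁ ≤ 1 ∧ dist b₁ c₁ ≤ 1 ∧ dist a₁ c₁ ≤ 1)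
    (h₂ : dist a₂ b₂ ≤ 1 ∧ dist b₂ c₂ ≤ 1 ∧ dist a₂ c₂ ≤ 1)
    (hg₁ : g ∈ convexHull ℝ ({a₁, b₁, c₁} : Set (EuclideanSpace ℝ (Fin 2))))
    (hg₂ : g ∈ convexHull ℝ ({a₂, b₂, c₂} : Set (EuclideanSpace ℝ (Fin 2))))
    (S : Set (EuclideanSpace ℝ (Fin 2))) (hS : S = {a₁, b₁, c₁, a₂, b₂, c₂})
    (G : SimpleGraph S)
    (hG : ∀ p q : S, G.Adj p q ↔ p ≠ q ∧ dist (p : EuclideanSpace ℝ (Fin 2)) q ≤ 1) :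
    (∃ p ∈ ({a₁, b₁, c₁} : Set (EuclideanSpace ℝ (Fin 2))),
       ∃ q ∈ ({a₂, b₂, c₂} : Set (EuclideanSpace ℝ (Fin 2))), dist p q ≤ 1) ∧
    (∀ p q : S, ∃ w : G.Walk p q, w.length ≤ 3) := by
  obtain ⟨d1ab, d1bc, d1ac⟩ := h₁
  obtain ⟨d2ab, d2bc, d2ac⟩ := h₂
  have hK1cl : IsClosed (convexHull ℝ ({a₁, b₁, c₁} : Set E2)) :=
    (Set.toFinite _).isClosed_convexHull (𝕜 := ℝ)
  have hK2cl : IsClosed (convexHull ℝ ({a₂, b₂, c₂} : Set E2)) :=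
    (Set.toFinite _).isClosed_convexHull (𝕜 := ℝ)
  have key : ∃ p ∈ ({a₁, b₁, c₁} : Set E2), ∃ q ∈ ({a₂, b₂, c₂} : Set E2), dist p q ≤ 1 := by
    by_cases ha2 : a₂ ∈ convexHull ℝ ({a₁, b₁, c₁} : Set E2)
    · refine ⟨a₁, by simp, a₂, by simp, ?_⟩
      have := hull_dist_le d1ab d1ac ha2
      rwa [dist_comm]
    · obtain ⟨x, hxseg, hxK1, hxint⟩ := exit_point hK1cl hg₁ ha2
      have hxK2 : x ∈ convexHull ℝ ({a₂, b₂, c₂} : Set E2) :=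
        (convex_convexHull ℝ _).segment_subset hg₂
          (subset_convexHull ℝ _ (by simp : a₂ ∈ ({a₂, b₂, c₂} : Set E2))) hxseg
      have hxedge := mem_edges_of_not_interior hxK1 hxint
      -- extract the edge of T1 containing x
      have hedge : ∃ u v : E2, u ∈ ({a₁, b₁, c₁} : Set E2) ∧ v ∈ ({a₁, b₁, c₁} : Set E2) ∧
          dist u v ≤ 1 ∧ x ∈ segment ℝ u v := by
        rcases hxedge with (h | h) | h
        · exact ⟨a₁, b₁, by simp, by simp, d1ab, h⟩
        · exact ⟨b₁, c₁, by simp, by simp, d1bc, h⟩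
        · exact ⟨a₁, c₁, by simp, by simp, d1ac, h⟩
      obtain ⟨u, v, hu, hv, huv, hxuv⟩ := hedge
      by_cases huK2 : u ∈ convexHull ℝ ({a₂, b₂, c₂} : Set E2)
      · exact ⟨u, hu, a₂, by simp, hull_dist_le d2ab d2ac huK2⟩
      · obtain ⟨y, hyseg, hyK2, hyint⟩ := exit_point hK2cl hxK2 huK2
        have hyuv : y ∈ segment ℝ u v :=
          (convex_segment u v).segment_subset hxuv (left_mem_segment ℝ u v) hyseg
        have hyedge := mem_edges_of_not_interior hyK2 hyint
        obtain ⟨q', hq', hq'd⟩ := near_vertex d2ab d2bc d2ac hyedge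
        have h1 : dist y u ≤ 1 / 2 ∨ dist y v ≤ 1 / 2 := seg_half huv hyuv
        rcases h1 with h1 | h1
        · refine ⟨u, hu, q', hq', ?_⟩
          calc dist u q' ≤ dist u y + dist y q' := dist_triangle _ _ _
            _ ≤ 1 / 2 + 1 / 2 := by rw [dist_comm u y]; exact add_le_add h1 hq'd
            _ = 1 := by norm_num
        · refine ⟨v, hv, q', hq', ?_⟩
          calc dist v q' ≤ dist v y + dist y q' := dist_triangle _ _ _
            _ ≤ 1 / 2 + 1 / 2 := by rw [dist_comm v y]; exact add_le_add h1 hq'd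
            _ = 1 := by norm_num
  refine ⟨key, ?_⟩
  -- walks of length ≤ 3
  obtain ⟨p₀, hp₀, q₀, hq₀, hpq₀⟩ := key
  have hd1 : ∀ x ∈ ({a₁, b₁, c₁} : Set E2), ∀ y ∈ ({a₁, b₁, c₁} : Set E2), dist x y ≤ 1 := by
    intro x hx y hy
    rcases hx with rfl | rfl | rfl <;> rcases hy with rfl | rfl | rfl <;>
      first
        | simp
        | assumption
        | (rw [dist_comm]; assumption)
  have hd2 : ∀ x ∈ ({a₂, b₂, c₂} : Set E2), ∀ y ∈ ({a₂, b₂, c₂} : Set E2), dist x y ≤ 1 := by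
    intro x hx y hy
    rcases hx with rfl | rfl | rfl <;> rcases hy with rfl | rfl | rfl <;>
      first
        | simp
        | assumption
        | (rw [dist_comm]; assumption)
  have hSU : S = ({a₁, b₁, c₁} : Set E2) ∪ ({a₂, b₂, c₂} : Set E2) := by
    rw [hS]; ext z; simp; tauto
  have hmem1 : ∀ x ∈ ({a₁, b₁, c₁} : Set E2), x ∈ S := fun x hx => by
    rw [hSU]; exact Or.inl hx
  have hmem2 : ∀ x ∈ ({a₂, b₂, c₂} : Set E2), x ∈ S := fun x hx => by
    rw [hSU]; exact Or.inr hx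
  set P0 : S := ⟨p₀, hmem1 p₀ hp₀⟩ with hP0
  set Q0 : S := ⟨q₀, hmem2 q₀ hq₀⟩ with hQ0
  have step : ∀ u v : S, dist (u : E2) v ≤ 1 → ∃ w : G.Walk u v, w.length ≤ 1 := by
    intro u v hd
    by_cases h : u = v
    · subst h; exact ⟨SimpleGraph.Walk.nil, by simp⟩
    · exact ⟨SimpleGraph.Walk.cons ((hG u v).2 ⟨h, hd⟩) SimpleGraph.Walk.nil, by simp⟩
  intro p q
  have hp : (p : E2) ∈ ({a₁, b₁, c₁} : Set E2) ∪ ({a₂, b₂, c₂} : Set E2) := by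
    exact (Set.ext_iff.mp hSU _).mp p.2
  have hq : (q : E2) ∈ ({a₁, b₁, c₁} : Set E2) ∪ ({a₂, b₂, c₂} : Set E2) := by
    exact (Set.ext_iff.mp hSU _).mp q.2
  rcases hp with hp | hp <;> rcases hq with hq | hq
  · obtain ⟨w, hw⟩ := step p q (hd1 _ hp _ hq)
    exact ⟨w, by omega⟩
  · obtain ⟨w1, hw1⟩ := step p P0 (hd1 _ hp _ hp₀)
    obtain ⟨w2, hw2⟩ := step P0 Q0 hpq₀
    obtain ⟨w3, hw3⟩ := step Q0 q (hd2 _ hq₀ _ hq)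
    refine ⟨w1.append (w2.append w3), ?_⟩
    simp only [SimpleGraph.Walk.length_append]
    omega
  · obtain ⟨w1, hw1⟩ := step p Q0 (hd2 _ hp _ hq₀)
    obtain ⟨w2, hw2⟩ := step Q0 P0 (by rw [dist_comm] at hpq₀; exact hpq₀)
    obtain ⟨w3, hw3⟩ := step P0 q (hd1 _ hp₀ _ hq)
    refine ⟨w1.append (w2.append w3), ?_⟩
    simp only [SimpleGraph.Walk.length_append]
    omega
  · obtain ⟨w, hw⟩ := step p q (hd2 _ hp _ hq)
    exact ⟨w, by omega⟩
end

section
/- Let G be a unit-disk graph on V ⊆ ℝ², let u ∈ V lie in a grid cell C of side length c = √15/10 with center g, and let r be the representative of C. Then u and r are adjacent or equal in G, i.e., hop_G(u, r) ≤ 1. -/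
/-!
The cell has half-diagonal `√2 · c / 2 = √30 / 20 < 1/3`, so `‖u - g‖ ≤ 1/3` and it suffices to
show `‖g - r‖ ≤ 2/3`. If `r` is a triangle candidate, `g` lies within `2/3` of the vertex of
largest barycentric weight of that triangle, which is itself a candidate, so the closest
candidate `r` is that close too. Otherwise `u` is an edge candidate (the degenerate edge `uu`
meets the cell), so `‖g - r‖ ≤ ‖g - u‖ ≤ 1/3`.
-/

/-- The set `𝒞₁(g)` of vertices of triangles of the unit-disk graph on `V` containing `g`. -/
def triCand (V : Set (EuclideanSpace ℝ (Fin 2))) (g : EuclideanSpace ℝ (Fin 2)) :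
    Set (EuclideanSpace ℝ (Fin 2)) :=
  {v ∈ V | ∃ a ∈ V, ∃ b ∈ V, dist v a ≤ 1 ∧ dist a b ≤ 1 ∧ dist v b ≤ 1 ∧
    g ∈ convexHull ℝ ({v, a, b} : Set (EuclideanSpace ℝ (Fin 2)))}

/-- The set `𝒞₂(g)` of vertices incident to an edge of the unit-disk graph on `V`
intersecting the cell `C`. -/
def edgeCand (V C : Set (EuclideanSpace ℝ (Fin 2))) : Set (EuclideanSpace ℝ (Fin 2)) :=
  {v ∈ V | ∃ w ∈ V, dist v w ≤ 1 ∧ (segment ℝ v w ∩ C).Nonempty}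

/-- `r` is the representative of the cell `C` with center `g`: the candidate from `𝒞₁(g)`
closest to `g` if `𝒞₁(g) ≠ ∅`, otherwise the candidate from `𝒞₂(g)` closest to `g`. -/
def IsRep (V C : Set (EuclideanSpace ℝ (Fin 2))) (g r : EuclideanSpace ℝ (Fin 2)) : Prop :=
  (r ∈ triCand V g ∧ ∀ v ∈ triCand V g, dist g r ≤ dist g v) ∨
  (triCand V g = ∅ ∧ r ∈ edgeCand V C ∧ ∀ v ∈ edgeCand V C, dist g r ≤ dist g v)

open Finset

theorem EuclideanSpace.dist_le_sqrt_card_mul {ι : Type*} [Fintype ι] {x y : EuclideanSpace ℝ ι}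
    {h : ℝ} (hxy : ∀ i, |x i - y i| ≤ h) : dist x y ≤ √(Fintype.card ι) * h := by
  rcases isEmpty_or_nonempty ι with hι | ⟨⟨i⟩⟩
  · simp [Subsingleton.elim x y]
  have h0 : 0 ≤ h := (abs_nonneg _).trans (hxy i)
  calc dist x y = √(∑ i, dist (x i) (y i) ^ 2) := EuclideanSpace.dist_eq x y
    _ ≤ √(∑ _ : ι, h ^ 2) := by
      gcongr with i
      rw [Real.dist_eq]
      exact hxy i
    _ = √(Fintype.card ι) * h := by
      simp [Real.sqrt_mul, Real.sqrt_sq h0]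

/-- The witness is the point `x` of largest barycentric weight `w x ≥ 1/n`, since
`g - x = ∑ y, w y • (y - x)`. -/
theorem Finset.exists_dist_le_of_mem_convexHull {E : Type*} [NormedAddCommGroup E]
    [NormedSpace ℝ E] {s : Finset E} {d : ℝ} (hs : ∀ x ∈ s, ∀ y ∈ s, dist x y ≤ d) {g : E}
    (hg : g ∈ convexHull ℝ (s : Set E)) : ∃ x ∈ s, dist g x ≤ (1 - (#s : ℝ)⁻¹) * d := by
  classical
  rw [Finset.convexHull_eq] at hg
  obtain ⟨w, hw0, hw1, rfl⟩ := hg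
  obtain ⟨x, hx, hmax⟩ := s.exists_max_image w (nonempty_of_sum_ne_zero (f := w) (by simp [hw1]))
  refine ⟨x, hx, ?_⟩
  have hcard : (0 : ℝ) < #s := by exact_mod_cast card_pos.mpr ⟨x, hx⟩
  have hwx : (#s : ℝ)⁻¹ ≤ w x := by
    rw [inv_le_iff_one_le_mul₀ hcard, ← hw1, mul_comm, ← nsmul_eq_mul]
    exact sum_le_card_nsmul s w (w x) hmax
  have hcenter : s.centerMass w id - x = ∑ y ∈ s, w y • (y - x) := by
    simp [centerMass_eq_of_sum_1 _ _ hw1, smul_sub, sum_sub_distrib, ← sum_smul, hw1]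
  calc dist (s.centerMass w id) x = ‖∑ y ∈ s, w y • (y - x)‖ := by rw [dist_eq_norm, hcenter]
    _ ≤ ∑ y ∈ s, w y * ‖y - x‖ := by
      refine (norm_sum_le _ _).trans_eq (sum_congr rfl fun y hy => ?_)
      rw [norm_smul, Real.norm_of_nonneg (hw0 y hy)]
    _ = ∑ y ∈ s.erase x, w y * ‖y - x‖ := (sum_erase _ (by simp)).symm
    _ ≤ ∑ y ∈ s.erase x, w y * d := by
      gcongr with y hy
      · exact hw0 y (mem_of_mem_erase hy)
      · rw [← dist_eq_norm]; exact hs y (mem_of_mem_erase hy) x hx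
    _ = (1 - w x) * d := by rw [← sum_mul, sum_erase_eq_sub hx, hw1]
    _ ≤ (1 - (#s : ℝ)⁻¹) * d := by
      gcongr
      exact (dist_self x).symm.le.trans (hs x hx x hx)

theorem exists_dist_le_two_thirds_mul_of_mem_convexHull_triple {E : Type*} [NormedAddCommGroup E]
    [NormedSpace ℝ E] {v a b g : E} {d : ℝ} (hva : dist v a ≤ d) (hab : dist a b ≤ d)
    (hvb : dist v b ≤ d) (hg : g ∈ convexHull ℝ ({v, a, b} : Set E)) :
    ∃ x ∈ ({v, a, b} : Set E), dist g x ≤ 2 / 3 * d := by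
  classical
  have hd : 0 ≤ d := dist_nonneg.trans hva
  have hs : ∀ x ∈ ({v, a, b} : Finset E), ∀ y ∈ ({v, a, b} : Finset E), dist x y ≤ d := by
    simp only [mem_insert, mem_singleton]
    rintro x (rfl | rfl | rfl) y (rfl | rfl | rfl) <;> simp_all [dist_comm]
  obtain ⟨x, hx, hgx⟩ := exists_dist_le_of_mem_convexHull hs (by simpa using hg)
  refine ⟨x, by simpa using hx, hgx.trans (mul_le_mul_of_nonneg_right ?_ hd)⟩
  have hcard : (#({v, a, b} : Finset E) : ℝ) ≤ 3 := by exact_mod_cast card_le_three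
  have hpos : (0 : ℝ) < #({v, a, b} : Finset E) := by exact_mod_cast card_pos.mpr ⟨x, hx⟩
  have : (3 : ℝ)⁻¹ ≤ (#({v, a, b} : Finset E) : ℝ)⁻¹ := inv_anti₀ hpos hcard
  linarith

theorem mem_triCand_of_mem_triangle {V : Set (EuclideanSpace ℝ (Fin 2))}
    {g v a b : EuclideanSpace ℝ (Fin 2)} (hv : v ∈ V) (ha : a ∈ V) (hb : b ∈ V)
    (hva : dist v a ≤ 1) (hab : dist a b ≤ 1) (hvb : dist v b ≤ 1)
    (hg : g ∈ convexHull ℝ ({v, a, b} : Set (EuclideanSpace ℝ (Fin 2)))) :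
    ∀ x ∈ ({v, a, b} : Set (EuclideanSpace ℝ (Fin 2))), x ∈ triCand V g := by
  rintro x (rfl | rfl | rfl)
  · exact ⟨hv, a, ha, b, hb, hva, hab, hvb, hg⟩
  · refine ⟨ha, v, hv, b, hb, by rwa [dist_comm], hvb, hab, ?_⟩
    rwa [Set.insert_comm]
  · refine ⟨hb, a, ha, v, hv, by rwa [dist_comm], by rwa [dist_comm], by rwa [dist_comm], ?_⟩
    rwa [Set.pair_comm, Set.insert_comm, Set.pair_comm]

theorem dist_le_two_thirds_of_isLeast_triCand {V : Set (EuclideanSpace ℝ (Fin 2))}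
    {g r : EuclideanSpace ℝ (Fin 2)} (hr : r ∈ triCand V g)
    (hmin : ∀ v ∈ triCand V g, dist g r ≤ dist g v) : dist g r ≤ 2 / 3 := by
  obtain ⟨hrV, a, ha, b, hb, hra, hab, hrb, hg⟩ := hr
  obtain ⟨x, hx, hgx⟩ := exists_dist_le_two_thirds_mul_of_mem_convexHull_triple hra hab hrb hg
  exact (hmin x (mem_triCand_of_mem_triangle hrV ha hb hra hab hrb hg x hx)).trans
    (hgx.trans_eq (mul_one _))

theorem mem_edgeCand_self {V C : Set (EuclideanSpace ℝ (Fin 2))} {u : EuclideanSpace ℝ (Fin 2)}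
    (hu : u ∈ V) (huC : u ∈ C) : u ∈ edgeCand V C :=
  ⟨hu, u, hu, by simp, u, by simp, huC⟩

/-- If `u ∈ V` lies in a grid cell `C` of side `c = √15/10` with center `g`
and representative `r`, then `u` and `r` are adjacent or equal in the unit-disk graph,
i.e. `hop_G(u, r) ≤ 1` (equivalently `dist u r ≤ 1`). -/
theorem stmt_8 (V : Set (EuclideanSpace ℝ (Fin 2))) (c : ℝ) (hc : c = Real.sqrt 15 / 10)
    (g : EuclideanSpace ℝ (Fin 2))
    (C : Set (EuclideanSpace ℝ (Fin 2)))
    (hC : C = {x | ∀ i, |x i - g i| ≤ c / 2})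
    (u r : EuclideanSpace ℝ (Fin 2)) (hu : u ∈ V) (huC : u ∈ C)
    (hr : IsRep V C g r) :
    dist u r ≤ 1 := by
  have hug : dist u g ≤ 1 / 3 := by
    subst hC
    calc dist u g ≤ √(Fintype.card (Fin 2)) * (c / 2) := EuclideanSpace.dist_le_sqrt_card_mul huC
      _ = √(2 * 15) / 20 := by rw [hc, Fintype.card_fin, Real.sqrt_mul zero_le_two]; push_cast; ring
      _ ≤ 1 / 3 := by
        rw [div_le_iff₀ (by norm_num), Real.sqrt_le_iff]
        norm_num
  have hgr : dist g r ≤ 2 / 3 := by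
    rcases hr with ⟨hrT, hmin⟩ | ⟨-, -, hmin⟩
    · exact dist_le_two_thirds_of_isLeast_triCand hrT hmin
    · linarith [hmin u (mem_edgeCand_self hu huC), dist_comm g u]
  linarith [dist_triangle u g r]
end

section
/- Let g1 and g2 be centers of two horizontally or vertically adjacent grid cells of side length c = √15/10 in a unit-disk graph G on V ⊆ ℝ², and let u, v ∈ V be the representatives of g1, g2 respectively. Then hop_G(u, v) ≤ 3. -/
/-!
Every representative `r` of a cell with center `g` is one hop away from the vertices of a
unit-disk triangle containing `g`, or from the endpoints of a unit edge through a point `x` of the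
cell. If `y` lies in a triangle (resp. segment) with sides at most 1, averaging `dist z ·²` over
the vertices with the barycentric weights of `y` shows that some vertex `e` has
`dist z e² ≤ dist z y² + 1/3` (resp. `+ 1/4`). Since `c² = 3/20`, two such steps bridge adjacent
cells when one representative comes from a triangle (`3/20 + 2/3 ≤ 1` and `3/8 + 1/3 + 1/4 ≤ 1`).
Two edges meeting adjacent cells carry points at distance at most `√5 c = √3/2`; in the plane the
closest points of two segments either coincide or can be chosen with one of them an endpoint, and
either way two endpoints are within distance 1.
-/

open Set

local notation "ℝ²" => EuclideanSpace ℝ (Fin 2)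

theorem Real.exists_endpoint_mem_segment_of_mem_segment {x₀ x₁ y₀ y₁ z : ℝ}
    (hx : z ∈ segment ℝ x₀ x₁) (hy : z ∈ segment ℝ y₀ y₁) :
    (∃ x ∈ ({x₀, x₁} : Set ℝ), x ∈ segment ℝ y₀ y₁) ∨
      ∃ y ∈ ({y₀, y₁} : Set ℝ), y ∈ segment ℝ x₀ x₁ := by
  simp only [segment_eq_uIcc] at *
  rcases le_total (max x₀ x₁) (max y₀ y₁) with h | h
  · refine .inl ⟨max x₀ x₁, ?_, hy.1.trans hx.2, h⟩
    rcases max_choice x₀ x₁ with h' | h' <;> simp [h']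
  · refine .inr ⟨max y₀ y₁, ?_, hx.1.trans hy.2, h⟩
    rcases max_choice y₀ y₁ with h' | h' <;> simp [h']

theorem exists_le_of_weighted_sum_le {w₁ w₂ w₃ d₁ d₂ d₃ B : ℝ} (h₁ : 0 ≤ w₁) (h₂ : 0 ≤ w₂)
    (h₃ : 0 ≤ w₃) (hw : w₁ + w₂ + w₃ = 1) (h : w₁ * d₁ + w₂ * d₂ + w₃ * d₃ ≤ B) :
    d₁ ≤ B ∨ d₂ ≤ B ∨ d₃ ≤ B := by
  by_contra! hd
  obtain ⟨hd₁, hd₂, hd₃⟩ := hd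
  have hm : B < min d₁ (min d₂ d₃) := lt_min hd₁ (lt_min hd₂ hd₃)
  nlinarith [congrArg (· * min d₁ (min d₂ d₃)) hw,
    mul_le_mul_of_nonneg_left (min_le_left d₁ (min d₂ d₃)) h₁,
    mul_le_mul_of_nonneg_left ((min_le_right d₁ _).trans (min_le_left d₂ d₃)) h₂,
    mul_le_mul_of_nonneg_left ((min_le_right d₁ _).trans (min_le_right d₂ d₃)) h₃]

section Module

variable {E : Type*} [AddCommGroup E] [Module ℝ E]

theorem add_smul_mem_segment (c u : E) {s r t : ℝ} (ht : t ∈ segment ℝ s r) :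
    c + t • u ∈ segment ℝ (c + s • u) (c + r • u) := by
  obtain ⟨α, β, hα, hβ, hαβ, rfl⟩ := ht
  exact ⟨α, β, hα, hβ, hαβ, by linear_combination (norm := module) hαβ • c⟩

theorem exists_eq_add_smul_of_mem_segment {p q y u : E} {k : ℝ} (hy : y ∈ segment ℝ p q)
    (hk : q - p = k • u) :
    ∃ s₀ s₁ : ℝ, (0 : ℝ) ∈ segment ℝ s₀ s₁ ∧ p = y + s₀ • u ∧ q = y + s₁ • u := by
  obtain ⟨a, b, ha, hb, hab, rfl⟩ := hy
  refine ⟨-(b * k), a * k, ⟨a, b, ha, hb, hab, by simp; ring⟩, ?_, ?_⟩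
  · linear_combination (norm := module) (-b) • hk - hab • p
  · linear_combination (norm := module) a • hk - hab • q

theorem exists_endpoint_add_mem_segment_of_collinear (y₁ y₂ u : E) {s₀ s₁ t₀ t₁ : ℝ}
    (hs : (0 : ℝ) ∈ segment ℝ s₀ s₁) (ht : (0 : ℝ) ∈ segment ℝ t₀ t₁) :
    (∃ e ∈ ({y₁ + s₀ • u, y₁ + s₁ • u} : Set E),
        e + (y₂ - y₁) ∈ segment ℝ (y₂ + t₀ • u) (y₂ + t₁ • u)) ∨
      ∃ e ∈ ({y₂ + t₀ • u, y₂ + t₁ • u} : Set E),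
        e + (y₁ - y₂) ∈ segment ℝ (y₁ + s₀ • u) (y₁ + s₁ • u) := by
  rcases Real.exists_endpoint_mem_segment_of_mem_segment hs ht with ⟨s, hs, hmem⟩ | ⟨t, ht, hmem⟩
  · refine .inl ⟨y₁ + s • u, by rcases hs with rfl | rfl <;> simp, ?_⟩
    rw [show y₁ + s • u + (y₂ - y₁) = y₂ + s • u by abel]
    exact add_smul_mem_segment y₂ u hmem
  · refine .inr ⟨y₂ + t • u, by rcases ht with rfl | rfl <;> simp, ?_⟩
    rw [show y₂ + t • u + (y₁ - y₂) = y₁ + t • u by abel]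
    exact add_smul_mem_segment y₁ u hmem

theorem exists_endpoint_add_mem_segment_of_parallel {p₁ q₁ p₂ q₂ y₁ y₂ : E} {k : ℝ}
    (hy₁ : y₁ ∈ segment ℝ p₁ q₁) (hy₂ : y₂ ∈ segment ℝ p₂ q₂) (hk : k • (q₁ - p₁) = q₂ - p₂) :
    (∃ e ∈ ({p₁, q₁} : Set E), e + (y₂ - y₁) ∈ segment ℝ p₂ q₂) ∨
      ∃ e ∈ ({p₂, q₂} : Set E), e + (y₁ - y₂) ∈ segment ℝ p₁ q₁ := by
  obtain ⟨s₀, s₁, hs, hp₁, hq₁⟩ := exists_eq_add_smul_of_mem_segment hy₁ (one_smul ℝ _).symm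
  obtain ⟨t₀, t₁, ht, hp₂, hq₂⟩ := exists_eq_add_smul_of_mem_segment hy₂ hk.symm
  generalize q₁ - p₁ = u at hp₁ hq₁ hp₂ hq₂
  subst hp₁ hq₁ hp₂ hq₂
  exact exists_endpoint_add_mem_segment_of_collinear y₁ y₂ u hs ht

theorem isCompact_segment [TopologicalSpace E] [IsTopologicalAddGroup E] [ContinuousSMul ℝ E]
    (p q : E) : IsCompact (segment ℝ p q) := by
  simpa only [convexHull_pair] using (toFinite {p, q}).isCompact_convexHull ℝ

end Module

section MetricSpace

variable {E : Type*} [PseudoMetricSpace E]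

def HopApprox (V : Set E) (r y : E) (δ : ℝ) : Prop :=
  ∀ z, ∃ e ∈ V, dist r e ≤ 1 ∧ dist z e ^ 2 ≤ dist z y ^ 2 + δ

theorem HopApprox.exists_path {V : Set E} {u v y₁ y₂ : E} {δ₁ δ₂ : ℝ}
    (hu : HopApprox V u y₁ δ₁) (hv : HopApprox V v y₂ δ₂) (h : dist y₁ y₂ ^ 2 + δ₁ + δ₂ ≤ 1) :
    ∃ X ∈ V, ∃ Y ∈ V, dist u X ≤ 1 ∧ dist X Y ≤ 1 ∧ dist Y v ≤ 1 := by
  obtain ⟨Y, hY, hvY, hY₁⟩ := hv y₁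
  obtain ⟨X, hX, huX, hXY⟩ := hu Y
  refine ⟨X, hX, Y, hY, huX, ?_, dist_comm v Y ▸ hvY⟩
  rw [dist_comm Y y₁] at hXY
  exact (pow_le_one_iff_of_nonneg dist_nonneg two_ne_zero).1 (by rw [dist_comm]; linarith)

theorem exists_walk_length_le_one {V : Set E} {G : SimpleGraph V}
    (hG : ∀ a b : V, G.Adj a b ↔ a ≠ b ∧ dist (a : E) b ≤ 1) {a b : V} (h : dist (a : E) b ≤ 1) :
    ∃ w : G.Walk a b, w.length ≤ 1 := by
  by_cases hab : a = b
  · subst hab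
    exact ⟨.nil, zero_le_one⟩
  · exact ⟨((hG a b).2 ⟨hab, h⟩).toWalk, le_rfl⟩

theorem exists_walk_length_le_three {V : Set E} {G : SimpleGraph V}
    (hG : ∀ a b : V, G.Adj a b ↔ a ≠ b ∧ dist (a : E) b ≤ 1) {u v X Y : V}
    (huX : dist (u : E) X ≤ 1) (hXY : dist (X : E) Y ≤ 1) (hYv : dist (Y : E) v ≤ 1) :
    ∃ w : G.Walk u v, w.length ≤ 3 := by
  obtain ⟨w₁, h₁⟩ := exists_walk_length_le_one hG huX
  obtain ⟨w₂, h₂⟩ := exists_walk_length_le_one hG hXY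
  obtain ⟨w₃, h₃⟩ := exists_walk_length_le_one hG hYv
  exact ⟨w₁.append (w₂.append w₃), by simp only [SimpleGraph.Walk.length_append]; omega⟩

end MetricSpace

section InnerProductSpace

variable {E : Type*} [NormedAddCommGroup E] [InnerProductSpace ℝ E]

theorem dist_sq_smul_add_smul (p q z : E) {a b : ℝ} (hab : a + b = 1) :
    a * dist z p ^ 2 + b * dist z q ^ 2 =
      dist z (a • p + b • q) ^ 2 + a * b * dist p q ^ 2 := by
  obtain rfl : b = 1 - a := by linarith
  have hz : z - (a • p + (1 - a) • q) = a • (z - p) + (1 - a) • (z - q) := by module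
  have hpq : p - q = (z - q) - (z - p) := by abel
  rw [dist_eq_norm, dist_eq_norm, dist_eq_norm, dist_eq_norm, hz, hpq]
  generalize z - p = A, z - q = B
  rw [norm_add_sq_real, norm_sub_sq_real, norm_smul, norm_smul, real_inner_smul_left,
    real_inner_smul_right, real_inner_comm A]
  simp only [Real.norm_eq_abs, mul_pow, sq_abs]
  ring

theorem exists_endpoint_dist_sq_le {p q y : E} (hy : y ∈ segment ℝ p q) (z : E) :
    ∃ e ∈ ({p, q} : Set E), dist z e ^ 2 ≤ dist z y ^ 2 + dist p q ^ 2 / 4 := by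
  obtain ⟨a, b, ha, hb, hab, rfl⟩ := hy
  have hid := dist_sq_smul_add_smul p q z hab
  have hw : a * b * dist p q ^ 2 ≤ 1 / 4 * dist p q ^ 2 :=
    mul_le_mul_of_nonneg_right (by nlinarith [sq_nonneg (a - b)]) (sq_nonneg _)
  rcases le_total (dist z p) (dist z q) with h | h
  · refine ⟨p, by simp, ?_⟩
    nlinarith [pow_le_pow_left₀ dist_nonneg h 2]
  · refine ⟨q, by simp, ?_⟩
    nlinarith [pow_le_pow_left₀ dist_nonneg h 2]

theorem exists_endpoint_dist_le_half {p q y : E} (hy : y ∈ segment ℝ p q) :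
    ∃ e ∈ ({p, q} : Set E), dist y e ≤ dist p q / 2 := by
  obtain ⟨e, he, h⟩ := exists_endpoint_dist_sq_le hy y
  refine ⟨e, he, (pow_le_pow_iff_left₀ dist_nonneg (by positivity) two_ne_zero).1 ?_⟩
  rw [dist_self] at h
  linarith

theorem exists_vertex_dist_sq_le {p₁ p₂ p₃ y : E} (h₁₂ : dist p₁ p₂ ≤ 1) (h₁₃ : dist p₁ p₃ ≤ 1)
    (h₂₃ : dist p₂ p₃ ≤ 1) (hy : y ∈ convexHull ℝ {p₁, p₂, p₃}) (z : E) :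
    ∃ e ∈ ({p₁, p₂, p₃} : Set E), dist z e ^ 2 ≤ dist z y ^ 2 + 1 / 3 := by
  rw [convexHull_insert (insert_nonempty p₂ {p₃}), convexHull_pair, convexJoin_singleton_left,
    mem_iUnion₂] at hy
  obtain ⟨m, ⟨a', b', ha', hb', hab', rfl⟩, a, b, ha, hb, hab, rfl⟩ := hy
  obtain rfl : a = 1 - b := by linarith
  have hz := dist_sq_smul_add_smul p₁ (a' • p₂ + b' • p₃) z hab
  have hm := dist_sq_smul_add_smul p₂ p₃ z hab'
  have hp₁ := dist_sq_smul_add_smul p₂ p₃ p₁ hab'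
  have hweighted : (1 - b) * dist z p₁ ^ 2 + b * a' * dist z p₂ ^ 2 + b * b' * dist z p₃ ^ 2 =
      dist z ((1 - b) • p₁ + b • (a' • p₂ + b' • p₃)) ^ 2 + (1 - b) * b * a' * dist p₁ p₂ ^ 2 +
        (1 - b) * b * b' * dist p₁ p₃ ^ 2 + b ^ 2 * a' * b' * dist p₂ p₃ ^ 2 := by
    linear_combination hz + b * hm - (1 - b) * b * hp₁
  have hsq : ∀ {x y : E}, dist x y ≤ 1 → dist x y ^ 2 ≤ 1 := fun h => pow_le_one₀ dist_nonneg h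
  have hsides : (1 - b) * b * a' * dist p₁ p₂ ^ 2 + (1 - b) * b * b' * dist p₁ p₃ ^ 2 +
      b ^ 2 * a' * b' * dist p₂ p₃ ^ 2 ≤ (1 - b) * b * a' + (1 - b) * b * b' + b ^ 2 * a' * b' := by
    linarith [mul_le_mul_of_nonneg_left (hsq h₁₂) (mul_nonneg (mul_nonneg ha hb) ha'),
      mul_le_mul_of_nonneg_left (hsq h₁₃) (mul_nonneg (mul_nonneg ha hb) hb'),
      mul_le_mul_of_nonneg_left (hsq h₂₃) (mul_nonneg (mul_nonneg (sq_nonneg b) ha') hb')]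
  have hweights : (1 - b) * b * a' + (1 - b) * b * b' + b ^ 2 * a' * b' ≤ 1 / 3 := by
    have ha'b' : a' * b' ≤ 1 / 4 := by nlinarith [sq_nonneg (a' - b')]
    nlinarith [mul_le_mul_of_nonneg_left ha'b' (sq_nonneg b), sq_nonneg (3 * b - 2)]
  have hbound : (1 - b) * dist z p₁ ^ 2 + b * a' * dist z p₂ ^ 2 + b * b' * dist z p₃ ^ 2 ≤
      dist z ((1 - b) • p₁ + b • (a' • p₂ + b' • p₃)) ^ 2 + 1 / 3 := by
    linarith
  rcases exists_le_of_weighted_sum_le ha (mul_nonneg hb ha') (mul_nonneg hb hb')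
    (by linear_combination b * hab') hbound with h | h | h
  · exact ⟨p₁, by simp, h⟩
  · exact ⟨p₂, by simp, h⟩
  · exact ⟨p₃, by simp, h⟩

theorem inner_sub_eq_zero_of_forall_dist_le {p q y z : E} (hy : y ∈ openSegment ℝ p q)
    (hmin : ∀ x ∈ segment ℝ p q, dist z y ≤ dist z x) : inner ℝ (z - y) (q - p) = 0 := by
  have hy' : y ∈ segment ℝ p q := openSegment_subset_segment ℝ p q hy
  have : Nonempty (segment ℝ p q) := ⟨⟨y, hy'⟩⟩
  have hinf : ‖z - y‖ = ⨅ x : segment ℝ p q, ‖z - x‖ :=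
    le_antisymm (le_ciInf fun x => by simpa only [dist_eq_norm] using hmin x x.2)
      (ciInf_le (f := fun x : segment ℝ p q => ‖z - x‖)
        ⟨0, forall_mem_range.2 fun _ => norm_nonneg _⟩ ⟨y, hy'⟩)
  have hvar := (norm_eq_iInf_iff_real_inner_le_zero (convex_segment p q) hy').mp hinf
  obtain ⟨a, b, ha, hb, hab, rfl⟩ := hy
  have hp := hvar p (left_mem_segment ℝ p q)
  have hq := hvar q (right_mem_segment ℝ p q)
  rw [show p - (a • p + b • q) = (-b) • (q - p) by linear_combination (norm := module) -(hab • p),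
    real_inner_smul_right] at hp
  rw [show q - (a • p + b • q) = a • (q - p) by linear_combination (norm := module) -(hab • q),
    real_inner_smul_right] at hq
  nlinarith

theorem hopApprox_of_mem_segment {V : Set E} {r w x : E} (hr : r ∈ V) (hw : w ∈ V)
    (hrw : dist r w ≤ 1) (hx : x ∈ segment ℝ r w) : HopApprox V r x (1 / 4) := by
  intro z
  obtain ⟨e, he, h⟩ := exists_endpoint_dist_sq_le hx z
  have hrw₂ : dist r w ^ 2 ≤ 1 := pow_le_one₀ dist_nonneg hrw
  rcases he with rfl | rfl
  · exact ⟨e, hr, by simp, by linarith⟩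
  · exact ⟨e, hw, hrw, by linarith⟩

variable [Fact (Module.finrank ℝ E = 2)]

theorem exists_endpoint_near_or_segment_inter_nonempty {p₁ q₁ p₂ q₂ x₁ x₂ : E}
    (hx₁ : x₁ ∈ segment ℝ p₁ q₁) (hx₂ : x₂ ∈ segment ℝ p₂ q₂) :
    (∃ e ∈ ({p₁, q₁} : Set E), ∃ y ∈ segment ℝ p₂ q₂, dist e y ≤ dist x₁ x₂) ∨
      (∃ e ∈ ({p₂, q₂} : Set E), ∃ y ∈ segment ℝ p₁ q₁, dist e y ≤ dist x₁ x₂) ∨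
      (segment ℝ p₁ q₁ ∩ segment ℝ p₂ q₂).Nonempty := by
  obtain ⟨⟨y₁, y₂⟩, ⟨hy₁, hy₂⟩, hmin⟩ := ((isCompact_segment p₁ q₁).prod
    (isCompact_segment p₂ q₂)).exists_isMinOn ⟨(x₁, x₂), hx₁, hx₂⟩ continuous_dist.continuousOn
  have hmin' : ∀ z₁ ∈ segment ℝ p₁ q₁, ∀ z₂ ∈ segment ℝ p₂ q₂, dist y₁ y₂ ≤ dist z₁ z₂ :=
    fun z₁ h₁ z₂ h₂ => isMinOn_iff.1 hmin (z₁, z₂) ⟨h₁, h₂⟩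
  have hle := hmin' x₁ hx₁ x₂ hx₂
  by_cases he₁ : y₁ ∈ ({p₁, q₁} : Set E)
  · exact .inl ⟨y₁, he₁, y₂, hy₂, hle⟩
  by_cases he₂ : y₂ ∈ ({p₂, q₂} : Set E)
  · exact .inr (.inl ⟨y₂, he₂, y₁, hy₁, dist_comm y₂ y₁ ▸ hle⟩)
  by_cases hcross : y₁ = y₂
  · exact .inr (.inr ⟨y₁, hy₁, hcross ▸ hy₂⟩)
  have hy₁o : y₁ ∈ openSegment ℝ p₁ q₁ := by
    rw [← insert_endpoints_openSegment] at hy₁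
    exact (hy₁.resolve_left fun h => he₁ (.inl h)).resolve_left fun h => he₁ (.inr h)
  have hy₂o : y₂ ∈ openSegment ℝ p₂ q₂ := by
    rw [← insert_endpoints_openSegment] at hy₂
    exact (hy₂.resolve_left fun h => he₂ (.inl h)).resolve_left fun h => he₂ (.inr h)
  have horth₁ : inner ℝ (y₂ - y₁) (q₁ - p₁) = 0 :=
    inner_sub_eq_zero_of_forall_dist_le hy₁o fun x hx =>
      by simpa only [dist_comm] using hmin' x hx y₂ hy₂
  have horth₂ : inner ℝ (y₂ - y₁) (q₂ - p₂) = 0 := by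
    rw [← neg_sub, inner_neg_left, inner_sub_eq_zero_of_forall_dist_le hy₂o fun x hx =>
      hmin' y₁ hy₁ x hx, neg_zero]
  have hu : q₁ - p₁ ≠ 0 := by
    intro h
    rw [sub_eq_zero.1 h, openSegment_same] at hy₁o
    exact he₁ (.inl hy₁o)
  obtain ⟨k, hk⟩ := Submodule.mem_span_singleton.1 <|
    Submodule.mem_span_singleton_of_inner_eq_zero_of_inner_eq_zero
      (sub_ne_zero.2 (Ne.symm hcross)) hu horth₂ horth₁
  rcases exists_endpoint_add_mem_segment_of_parallel hy₁ hy₂ hk with ⟨e, he, hmem⟩ | ⟨e, he, hmem⟩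
  · refine .inl ⟨e, he, _, hmem, ?_⟩
    rwa [dist_self_add_right, ← dist_eq_norm']
  · refine .inr (.inl ⟨e, he, _, hmem, ?_⟩)
    rwa [dist_self_add_right, ← dist_eq_norm]

theorem exists_endpoints_dist_le_one {p₁ q₁ p₂ q₂ x₁ x₂ : E} (h₁ : dist p₁ q₁ ≤ 1)
    (h₂ : dist p₂ q₂ ≤ 1) (hx₁ : x₁ ∈ segment ℝ p₁ q₁) (hx₂ : x₂ ∈ segment ℝ p₂ q₂)
    (hx : dist x₁ x₂ ^ 2 ≤ 3 / 4) :
    ∃ e₁ ∈ ({p₁, q₁} : Set E), ∃ e₂ ∈ ({p₂, q₂} : Set E), dist e₁ e₂ ≤ 1 := by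
  have hsq : ∀ {x y : E}, dist x y ≤ 1 → dist x y ^ 2 ≤ 1 := fun h => pow_le_one₀ dist_nonneg h
  have hle_one : ∀ {x y : E}, dist x y ^ 2 ≤ 1 → dist x y ≤ 1 := fun h =>
    (pow_le_one_iff_of_nonneg dist_nonneg two_ne_zero).1 h
  rcases exists_endpoint_near_or_segment_inter_nonempty hx₁ hx₂ with
    ⟨e₁, he₁, y, hy, hey⟩ | ⟨e₂, he₂, y, hy, hey⟩ | ⟨y, hy₁, hy₂⟩
  · obtain ⟨e₂, he₂, h⟩ := exists_endpoint_dist_sq_le hy e₁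
    refine ⟨e₁, he₁, e₂, he₂, hle_one ?_⟩
    nlinarith [pow_le_pow_left₀ dist_nonneg hey 2, hsq h₂]
  · obtain ⟨e₁, he₁, h⟩ := exists_endpoint_dist_sq_le hy e₂
    refine ⟨e₁, he₁, e₂, he₂, dist_comm e₁ e₂ ▸ hle_one ?_⟩
    nlinarith [pow_le_pow_left₀ dist_nonneg hey 2, hsq h₁]
  · obtain ⟨e₁, he₁, h₁'⟩ := exists_endpoint_dist_le_half hy₁
    obtain ⟨e₂, he₂, h₂'⟩ := exists_endpoint_dist_le_half hy₂
    exact ⟨e₁, he₁, e₂, he₂, by linarith [dist_triangle_left e₁ e₂ y]⟩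

theorem exists_path_of_mem_segments {V : Set E} {u v w₁ w₂ x₁ x₂ : E} (hu : u ∈ V) (hv : v ∈ V)
    (hw₁ : w₁ ∈ V) (hw₂ : w₂ ∈ V) (huw₁ : dist u w₁ ≤ 1) (hvw₂ : dist v w₂ ≤ 1)
    (hx₁ : x₁ ∈ segment ℝ u w₁) (hx₂ : x₂ ∈ segment ℝ v w₂) (hx : dist x₁ x₂ ^ 2 ≤ 3 / 4) :
    ∃ X ∈ V, ∃ Y ∈ V, dist u X ≤ 1 ∧ dist X Y ≤ 1 ∧ dist Y v ≤ 1 := by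
  obtain ⟨X, hX, Y, hY, hXY⟩ := exists_endpoints_dist_le_one huw₁ hvw₂ hx₁ hx₂ hx
  refine ⟨X, ?_, Y, ?_, ?_, hXY, ?_⟩
  · rcases hX with rfl | rfl <;> assumption
  · rcases hY with rfl | rfl <;> assumption
  · rcases hX with rfl | rfl <;> simp [huw₁]
  · rcases hY with rfl | rfl <;> simp [dist_comm, hvw₂]

end InnerProductSpace

theorem hopApprox_of_mem_triCand {V : Set ℝ²} {g r : ℝ²} (hr : r ∈ triCand V g) :
    HopApprox V r g (1 / 3) := by
  obtain ⟨hrV, a, ha, b, hb, hra, hab, hrb, hg⟩ := hr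
  intro z
  obtain ⟨e, he, h⟩ := exists_vertex_dist_sq_le hra hrb hab hg z
  rcases he with rfl | rfl | rfl
  · exact ⟨e, hrV, by simp, h⟩
  · exact ⟨e, ha, hra, h⟩
  · exact ⟨e, hb, hrb, h⟩

theorem IsRep.mem_triCand_or_mem_edgeCand {V C : Set ℝ²} {g r : ℝ²} (h : IsRep V C g r) :
    r ∈ triCand V g ∨ r ∈ edgeCand V C := by
  rcases h with ⟨h, -⟩ | ⟨-, h, -⟩
  exacts [.inl h, .inr h]

theorem dist_sq_le_of_adjacent_cells {c r₁ r₂ : ℝ} (hc : 0 ≤ c) {g₁ g₂ x₁ x₂ : ℝ²}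
    (hadj : g₂ - g₁ = (WithLp.equiv 2 (Fin 2 → ℝ)).symm ![c, 0] ∨
      g₂ - g₁ = (WithLp.equiv 2 (Fin 2 → ℝ)).symm ![0, c])
    (hx₁ : ∀ i, |x₁ i - g₁ i| ≤ r₁) (hx₂ : ∀ i, |x₂ i - g₂ i| ≤ r₂) :
    dist x₁ x₂ ^ 2 ≤ (c + r₁ + r₂) ^ 2 + (r₁ + r₂) ^ 2 := by
  have hsq : ∀ {t M : ℝ}, |t| ≤ M → t ^ 2 ≤ M ^ 2 := fun h => by
    simpa only [sq_abs] using pow_le_pow_left₀ (abs_nonneg _) h 2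
  have hcoord : ∀ i, x₁ i - x₂ i = (x₁ i - g₁ i) - (x₂ i - g₂ i) - (g₂ - g₁) i := by
    intro i
    rw [PiLp.sub_apply]
    ring
  have h₀ := abs_le.1 (hx₁ 0)
  have h₁ := abs_le.1 (hx₁ 1)
  have h₀' := abs_le.1 (hx₂ 0)
  have h₁' := abs_le.1 (hx₂ 1)
  rw [EuclideanSpace.dist_eq, Real.sq_sqrt (by positivity), Fin.sum_univ_two, Real.dist_eq,
    Real.dist_eq, sq_abs, sq_abs, hcoord, hcoord]
  rcases hadj with h | h <;> simp only [h, WithLp.equiv_symm_apply, Matrix.cons_val_zero,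
    Matrix.cons_val_one, Matrix.cons_val_fin_one, sub_zero] at *
  · linarith [hsq (t := x₁ 0 - g₁ 0 - (x₂ 0 - g₂ 0) - c) (M := c + r₁ + r₂)
      (abs_le.2 ⟨by linarith, by linarith⟩),
      hsq (t := x₁ 1 - g₁ 1 - (x₂ 1 - g₂ 1)) (M := r₁ + r₂) (abs_le.2 ⟨by linarith, by linarith⟩)]
  · linarith [hsq (t := x₁ 1 - g₁ 1 - (x₂ 1 - g₂ 1) - c) (M := c + r₁ + r₂)
      (abs_le.2 ⟨by linarith, by linarith⟩),
      hsq (t := x₁ 0 - g₁ 0 - (x₂ 0 - g₂ 0)) (M := r₁ + r₂) (abs_le.2 ⟨by linarith, by linarith⟩)]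

/-- If `g₁` and `g₂` are centers of two horizontally or vertically adjacent
grid cells of side `c = √15/10` and `u, v ∈ V` are their representatives, then the hop-distance
from `u` to `v` in the unit-disk graph on `V` is at most 3. -/
theorem stmt_9 (V : Set (EuclideanSpace ℝ (Fin 2))) (c : ℝ) (hc : c = Real.sqrt 15 / 10)
    (G : SimpleGraph V)
    (hG : ∀ a b : V, G.Adj a b ↔ a ≠ b ∧ dist (a : EuclideanSpace ℝ (Fin 2)) b ≤ 1)
    (g₁ g₂ : EuclideanSpace ℝ (Fin 2))
    (hadj : g₂ - g₁ = (WithLp.equiv 2 (Fin 2 → ℝ)).symm ![c, 0] ∨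
            g₂ - g₁ = (WithLp.equiv 2 (Fin 2 → ℝ)).symm ![0, c])
    (C₁ C₂ : Set (EuclideanSpace ℝ (Fin 2)))
    (hC₁ : C₁ = {x | ∀ i, |x i - g₁ i| ≤ c / 2})
    (hC₂ : C₂ = {x | ∀ i, |x i - g₂ i| ≤ c / 2})
    (u v : EuclideanSpace ℝ (Fin 2)) (hu : u ∈ V) (hv : v ∈ V)
    (hru : IsRep V C₁ g₁ u) (hrv : IsRep V C₂ g₂ v) :
    ∃ w : G.Walk ⟨u, hu⟩ ⟨v, hv⟩, w.length ≤ 3 := by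
  have hc₀ : 0 ≤ c := hc ▸ by positivity
  have hc₂ : c ^ 2 = 3 / 20 := by rw [hc, div_pow, Real.sq_sqrt (by norm_num)]; norm_num
  have : Fact (Module.finrank ℝ ℝ² = 2) := ⟨finrank_euclideanSpace_fin⟩
  have hcenter : ∀ g : ℝ², ∀ i, |g i - g i| ≤ 0 := by simp
  subst hC₁ hC₂
  obtain ⟨X, hX, Y, hY, huX, hXY, hYv⟩ :
      ∃ X ∈ V, ∃ Y ∈ V, dist u X ≤ 1 ∧ dist X Y ≤ 1 ∧ dist Y v ≤ 1 := by
    rcases hru.mem_triCand_or_mem_edgeCand with hu' | ⟨-, w₁, hw₁, huw₁, x₁, hx₁, hx₁C⟩ <;>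
      rcases hrv.mem_triCand_or_mem_edgeCand with hv' | ⟨-, w₂, hw₂, hvw₂, x₂, hx₂, hx₂C⟩
    · refine (hopApprox_of_mem_triCand hu').exists_path (hopApprox_of_mem_triCand hv') ?_
      nlinarith [dist_sq_le_of_adjacent_cells hc₀ hadj (hcenter g₁) (hcenter g₂)]
    · refine (hopApprox_of_mem_triCand hu').exists_path
        (hopApprox_of_mem_segment hv hw₂ hvw₂ hx₂) ?_
      nlinarith [dist_sq_le_of_adjacent_cells hc₀ hadj (hcenter g₁) hx₂C]
    · refine (hopApprox_of_mem_segment hu hw₁ huw₁ hx₁).exists_path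
        (hopApprox_of_mem_triCand hv') ?_
      nlinarith [dist_sq_le_of_adjacent_cells hc₀ hadj hx₁C (hcenter g₂)]
    · refine exists_path_of_mem_segments hu hv hw₁ hw₂ huw₁ hvw₂ hx₁ hx₂ ?_
      nlinarith [dist_sq_le_of_adjacent_cells hc₀ hadj hx₁C hx₂C]
  exact exists_walk_length_le_three hG (X := ⟨X, hX⟩) (Y := ⟨Y, hY⟩) huX hXY hYv
end
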